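/- arXiv:1905.08065 — 2 statements merged into one kernel-verified Lean document; each statement's English description precedes it below -/
import Mathlib

section
/- Suppose the output sequence (b_n) of the sequence interleaving algorithm is eventually periodic. Then from some block onward, all blocks are drawn from a single input sequence (a_{i_0,j})_j, and consequently that input sequence is eventually periodic. -/
/-- the n-th triangular number -/
def tri (n : ℕ) : ℕ := n * (n + 1) / 2

/-- the diagonal index sequence `1, 2, 1, 2, 3, 1, 2, 3, 4, …` (for `k ≥ 1`):
`idx k = k − tri n + 1` for the unique `n` with `tri n ≤ k < tri (n+1)`. -/
def idx (k : ℕ) : ℕ := k - tri ((Nat.sqrt (8 * k + 1) - 1) / 2) + 1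

/-- the minimal (finite) period of a list, if it has one -/
def listPeriod? {X : Type*} [DecidableEq X] (L : List X) : Option ℕ :=
  (List.range L.length).find? fun k =>
    decide (0 < k) && (L.drop k == L.take (L.length - k))

/-- the block of length `n` following the cyclic repetition of the pattern `S`,
starting at phase `ph` -/
def patternBlock {X : Type*} (S : List X) (d : X) (ph n : ℕ) : List X :=
  (List.range n).map fun j => S.getD ((ph + j) % S.length) d

/-- the state of the sequence interleaving algorithm: `k` is the pointer into the
diagonal index sequence, `used i` is the number of terms already removed from input
sequence `i`, and `flag` is `some (S, ph)` when the Boolean flag `P` is true with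
current finite-fundamental string `S` and phase `ph`, and `none` when `P` is false. -/
structure IState (X : Type*) where
  k : ℕ
  used : ℕ → ℕ
  flag : Option (List X × ℕ)

/-- one stage of the sequence interleaving algorithm: from state `s`, form block `B_l`
by removing `2^l` terms from the beginning of the unused part of input sequence
`idx s.k`, then check/update the periodicity flag, incrementing `k` exactly when the
flag ends up false.  Returns the new state together with the block produced. -/
def step {X : Type*} [DecidableEq X] (a : ℕ → ℕ → X) (s : IState X) (l : ℕ) :
    IState X × List X :=
  let i := idx s.k
  let B := (List.range (2 ^ l)).map fun j => a i (s.used i + 1 + j)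
  let used' := fun i' => if i' = i then s.used i + 2 ^ l else s.used i'
  match s.flag with
  | none =>
    match listPeriod? B with
    | some p => (⟨s.k, used', some (B.take p, 2 ^ l % p)⟩, B)
    | none => (⟨s.k + 1, used', none⟩, B)
  | some (S, ph) =>
    if B = patternBlock S (a 1 1) ph (2 ^ l) then
      (⟨s.k, used', some (S, (ph + 2 ^ l) % S.length)⟩, B)
    else (⟨s.k + 1, used', none⟩, B)

/-- `run a l` is the state of the interleaving algorithm after producing blocks
`B_1, …, B_l`, starting from `k = 1`, nothing used, and flag `P = false`. -/
def run {X : Type*} [DecidableEq X] (a : ℕ → ℕ → X) : ℕ → IState X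
  | 0 => ⟨1, fun _ => 0, none⟩
  | n + 1 => (step a (run a n) (n + 1)).1

/-- `block a l` is the block `B_l` (of length `2^l`) produced by the algorithm. -/
def block {X : Type*} [DecidableEq X] (a : ℕ → ℕ → X) (l : ℕ) : List X :=
  (step a (run a (l - 1)) l).2

/-- the output sequence of the sequence interleaving algorithm (1-indexed): the
concatenation `B_1 + B_2 + ⋯`, so position `n` lies in block `l = log₂ (n+1)`,
which occupies positions `2^l − 1` through `2^(l+1) − 2`. -/
def output {X : Type*} [DecidableEq X] (a : ℕ → ℕ → X) (n : ℕ) : X :=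
  (block a (Nat.log2 (n + 1))).getD (n + 1 - 2 ^ Nat.log2 (n + 1)) (a 1 1)

/-- a sequence (with relevant indices `≥ 1`) is eventually periodic -/
def EvPeriodic {X : Type*} (b : ℕ → X) : Prop :=
  ∃ m, 1 ≤ m ∧ ∃ r, ∀ n > r, b (n + m) = b n
namespace Stmt10Aux
variable {X : Type*} [DecidableEq X]

lemma mapRange_getD (f : ℕ → X) (n t : ℕ) (d : X) (ht : t < n) :
    (((List.range n).map f).getD t d) = f t := by
  rw [List.getD_eq_getElem?_getD, List.getElem?_map, List.getElem?_range ht]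
  rfl

lemma find?_range_min {f : ℕ → Bool} : ∀ {n p : ℕ},
    (List.range n).find? f = some p → ∀ q < p, f q = false := by
  intro n
  induction n with
  | zero => intro p h; simp [List.find?] at h
  | succ n ih =>
    intro p h q hq
    rw [List.range_succ, List.find?_append] at h
    rcases hfind : (List.range n).find? f with _ | p'
    · rw [hfind] at h
      simp only [Option.none_or] at h
      have hqn : q < n := by
        have := List.mem_of_find?_eq_some h
        simp at this
        omega
      have := List.find?_eq_none.mp hfind q (by simp [hqn])
      simpa using this
    · rw [hfind] at h
      simp only [Option.or] at h
      have : p' = p := by cases h; rfl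
      exact ih (this ▸ hfind) q hq

lemma step_fst_used (a : ℕ → ℕ → X) (s : IState X) (l : ℕ) :
    ((step a s l).1).used = fun i' =>
      if i' = idx s.k then s.used (idx s.k) + 2 ^ l else s.used i' := by
  unfold step
  rcases s.flag with _ | ⟨S, ph⟩
  · dsimp only
    rcases listPeriod? _ with _ | p <;> rfl
  · dsimp only
    split <;> rfl

lemma step_snd (a : ℕ → ℕ → X) (s : IState X) (l : ℕ) :
    (step a s l).2 = (List.range (2 ^ l)).map fun j => a (idx s.k) (s.used (idx s.k) + 1 + j) := by
  unfold step
  rcases s.flag with _ | ⟨S, ph⟩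
  · dsimp only
    rcases listPeriod? _ with _ | p <;> rfl
  · dsimp only
    split <;> rfl

lemma step_dichotomy (a : ℕ → ℕ → X) (s : IState X) (l : ℕ) :
    ((step a s l).1.flag = none ∧ (step a s l).1.k = s.k + 1) ∨
    ((step a s l).1.flag ≠ none ∧ (step a s l).1.k = s.k) := by
  unfold step
  rcases s.flag with _ | ⟨S, ph⟩
  · dsimp only
    rcases listPeriod? _ with _ | p
    · left; exact ⟨rfl, rfl⟩
    · right; exact ⟨by simp, rfl⟩
  · dsimp only
    split
    · right; exact ⟨by simp, rfl⟩
    · left; exact ⟨rfl, rfl⟩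

end Stmt10Aux
namespace Stmt10Aux
set_option linter.unusedSectionVars false
variable {X : Type*} [DecidableEq X]

lemma Bper {B : List X} {p : ℕ} (d : X) (hp0 : 0 < p)
    (hdt : B.drop p = B.take (B.length - p)) :
    ∀ t < B.length, B.getD t d = B.getD (t % p) d := by
  intro t
  induction t using Nat.strong_induction_on with
  | _ t ih =>
    intro ht
    by_cases hcase : t < p
    · rw [Nat.mod_eq_of_lt hcase]
    · push_neg at hcase
      have hsub : B.getD t d = B.getD (t - p) d := by
        have h1 : (B.drop p)[t - p]? = B[t]? := by
          rw [List.getElem?_drop]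
          congr 1; omega
        have h2 : (B.take (B.length - p))[t - p]? = B[t - p]? := by
          rw [List.getElem?_take, if_pos (by omega)]
        rw [List.getD_eq_getElem?_getD, List.getD_eq_getElem?_getD, ← h1, ← h2, hdt]
      rw [hsub, ih (t - p) (by omega) (by omega), Nat.mod_eq_sub_mod hcase]

lemma drop_eq_take_of_pointwise {B : List X} {p : ℕ} (d : X) (hp : p ≤ B.length)
    (h : ∀ t, t + p < B.length → B.getD (t + p) d = B.getD t d) :
    B.drop p = B.take (B.length - p) := by
  apply List.ext_getElem?
  intro n
  rw [List.getElem?_drop, List.getElem?_take]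
  by_cases hn : n < B.length - p
  · have hb1 : n + p < B.length := by omega
    have hb2 : n < B.length := by omega
    rw [if_pos hn, show p + n = n + p from Nat.add_comm p n,
        List.getElem?_eq_getElem hb1, List.getElem?_eq_getElem hb2]
    have hh := h n hb1
    rw [List.getD_eq_getElem _ d hb1] at hh
    rw [List.getD_eq_getElem _ d hb2] at hh
    exact congrArg some hh
  · rw [if_neg hn, List.getElem?_eq_none (by omega)]

lemma listPeriod?_some_spec {B : List X} {p : ℕ} (h : listPeriod? B = some p) :
    0 < p ∧ p < B.length ∧ B.drop p = B.take (B.length - p) := by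
  have h1 := List.find?_some h
  have h2 := List.mem_of_find?_eq_some h
  simp only [Bool.and_eq_true, decide_eq_true_eq, beq_iff_eq] at h1
  exact ⟨h1.1, List.mem_range.mp h2, h1.2⟩

lemma listPeriod?_min {B : List X} {p q : ℕ} (h : listPeriod? B = some p)
    (hq : 0 < q) (hqlen : q < B.length) (hdt : B.drop q = B.take (B.length - q)) :
    p ≤ q := by
  by_contra hc
  push_neg at hc
  have := find?_range_min h q hc
  simp only [Bool.and_eq_false_iff, decide_eq_false_iff_not, beq_eq_false_iff_ne] at this
  rcases this with h' | h' <;> [omega; exact h' hdt]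

lemma listPeriod?_isSome {B : List X} {q : ℕ}
    (hq : 0 < q) (hqlen : q < B.length) (hdt : B.drop q = B.take (B.length - q)) :
    ∃ p, listPeriod? B = some p := by
  have : (listPeriod? B).isSome := by
    rw [listPeriod?, List.find?_isSome]
    exact ⟨q, List.mem_range.mpr hqlen, by simp [hq, hdt]⟩
  exact Option.isSome_iff_exists.mp this

end Stmt10Aux
namespace Stmt10Aux
set_option linter.unusedSectionVars false
variable {X : Type*} [DecidableEq X]

lemma block_eq (a : ℕ → ℕ → X) (l : ℕ) :
    block a l = (List.range (2 ^ l)).map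
      fun j => a (idx (run a (l - 1)).k) ((run a (l - 1)).used (idx (run a (l - 1)).k) + 1 + j) := by
  rw [block, step_snd]

lemma block_length (a : ℕ → ℕ → X) (l : ℕ) : (block a l).length = 2 ^ l := by
  rw [block_eq]; simp

lemma output_block (a : ℕ → ℕ → X) {l t : ℕ} (ht : t < 2 ^ l) :
    output a (2 ^ l - 1 + t) = (block a l).getD t (a 1 1) := by
  have h2 : 1 ≤ 2 ^ l := Nat.one_le_two_pow
  have h1 : 2 ^ l - 1 + t + 1 = 2 ^ l + t := by omega
  have hlog : Nat.log2 (2 ^ l + t) = l := by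
    rw [Nat.log2_eq_log_two]
    exact Nat.log_eq_of_pow_le_of_lt_pow (Nat.le_add_right _ _) (by rw [pow_succ]; omega)
  unfold output
  rw [h1, hlog]
  congr 1
  omega

lemma step_flag_none {a : ℕ → ℕ → X} {s : IState X} {l p : ℕ}
    (hf : s.flag = none)
    (hp : listPeriod? ((List.range (2 ^ l)).map
      fun j => a (idx s.k) (s.used (idx s.k) + 1 + j)) = some p) :
    (step a s l).1.flag =
      some ((((List.range (2 ^ l)).map
        fun j => a (idx s.k) (s.used (idx s.k) + 1 + j)).take p), 2 ^ l % p) ∧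
    (step a s l).1.k = s.k := by
  unfold step
  rw [hf]
  dsimp only
  rw [hp]
  exact ⟨rfl, rfl⟩

lemma step_flag_some {a : ℕ → ℕ → X} {s : IState X} {l : ℕ} {S : List X} {ph : ℕ}
    (hf : s.flag = some (S, ph))
    (hB : (List.range (2 ^ l)).map (fun j => a (idx s.k) (s.used (idx s.k) + 1 + j)) =
      patternBlock S (a 1 1) ph (2 ^ l)) :
    (step a s l).1.flag = some (S, (ph + 2 ^ l) % S.length) ∧ (step a s l).1.k = s.k := by
  unfold step
  rw [hf]
  dsimp only
  rw [if_pos hB]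
  exact ⟨rfl, rfl⟩

lemma block_m_per {a : ℕ → ℕ → X} {m r : ℕ}
    (hper : ∀ n > r, output a (n + m) = output a n) {l : ℕ} (hr : r + 2 ≤ 2 ^ l) :
    ∀ t, t + m < 2 ^ l → (block a l).getD (t + m) (a 1 1) = (block a l).getD t (a 1 1) := by
  intro t ht
  rw [← output_block a ht, ← output_block a (show t < 2 ^ l by omega)]
  rw [show 2 ^ l - 1 + (t + m) = (2 ^ l - 1 + t) + m by omega]
  exact hper _ (by omega)

end Stmt10Aux
namespace Stmt10Aux
set_option linter.unusedSectionVars false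
set_option maxHeartbeats 1000000
variable {X : Type*} [DecidableEq X]

lemma add_mod_mod (x y n : ℕ) : (x % n + y) % n = (x + y) % n := by
  rw [Nat.add_mod x y n, Nat.add_mod (x % n) y n, Nat.mod_mod_of_dvd x dvd_rfl]

lemma getD_take {B : List X} {p i : ℕ} (d : X) (hi : i < p) :
    (B.take p).getD i d = B.getD i d := by
  rw [List.getD_eq_getElem?_getD, List.getD_eq_getElem?_getD, List.getElem?_take, if_pos hi]

def Inv (a : ℕ → ℕ → X) (l : ℕ) : Prop :=
  ∀ S ph, (run a l).flag = some (S, ph) →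
    0 < S.length ∧
      ∀ t, output a (2 ^ (l + 1) - 1 + t) = S.getD ((ph + t) % S.length) (a 1 1)

lemma inv_step {a : ℕ → ℕ → X} {m r : ℕ} (hm : 1 ≤ m)
    (hper : ∀ n > r, output a (n + m) = output a n) {l : ℕ}
    (hl : r + 2 * m + 2 ≤ 2 ^ (l + 1)) (hinv : Inv a l) :
    Inv a (l + 1) ∧ (run a (l + 1)).k = (run a l).k := by
  set d := a 1 1 with hd
  set s := run a l with hs
  set N := 2 ^ (l + 1) with hN
  have hN1 : 1 ≤ N := Nat.one_le_two_pow
  have hNlen : (block a (l + 1)).length = N := block_length a (l + 1)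
  have hBout : ∀ t, t < N → output a (N - 1 + t) = (block a (l + 1)).getD t d :=
    fun t ht => output_block a ht
  have hBm : ∀ t, t + m < N → (block a (l + 1)).getD (t + m) d = (block a (l + 1)).getD t d :=
    block_m_per hper (by omega)
  have hblock : block a (l + 1) =
      (List.range (2 ^ (l + 1))).map fun j => a (idx s.k) (s.used (idx s.k) + 1 + j) := by
    rw [block_eq]
    simp only [Nat.add_sub_cancel, hs]
  have hrun : run a (l + 1) = (step a s (l + 1)).1 := rfl
  have hNN : 2 ^ (l + 1 + 1) - 1 = N - 1 + N := by
    have : 2 ^ (l + 1 + 1) = 2 * N := by rw [hN, pow_succ]; ring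
    omega
  rcases hflag : s.flag with _ | ⟨S, ph⟩
  · -- flag none : the block is found periodic, flag becomes some with invariant
    have hdt : (block a (l + 1)).drop m =
        (block a (l + 1)).take ((block a (l + 1)).length - m) := by
      apply drop_eq_take_of_pointwise d (by omega)
      intro t ht
      exact hBm t (by omega)
    obtain ⟨p, hp⟩ := listPeriod?_isSome hm (by omega) hdt
    obtain ⟨hp0, hpN, hpdt⟩ := listPeriod?_some_spec hp
    rw [hNlen] at hpN
    have hpm : p ≤ m := listPeriod?_min hp hm (by omega) hdt
    rw [hblock] at hp
    have hstep := step_flag_none hflag hp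
    rw [← hblock, ← hrun] at hstep
    refine ⟨?_, hstep.2⟩
    have hper' : ∀ u, (block a (l + 1)).getD ((u + m) % p) d
        = (block a (l + 1)).getD (u % p) d := by
      intro u
      have hv : u % p < p := Nat.mod_lt _ hp0
      have e1 : (u + m) % p = (u % p + m) % p := (add_mod_mod u m p).symm
      rw [e1, ← Bper d hp0 hpdt (u % p + m) (by omega), hBm (u % p) (by omega)]
    have claimC : ∀ t, output a (N - 1 + t) = (block a (l + 1)).getD (t % p) d := by
      intro t
      induction t using Nat.strong_induction_on with
      | _ t ih =>
        by_cases htN : t < N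
        · rw [hBout t htN]
          exact Bper d hp0 hpdt t (by omega)
        · push_neg at htN
          have h1 : N - 1 + t = (N - 1 + (t - m)) + m := by omega
          rw [h1, hper _ (by omega), ih (t - m) (by omega),
            show t % p = (t - m + m) % p by congr 1; omega]
          exact (hper' (t - m)).symm
    intro S' ph' hf'
    rw [hstep.1] at hf'
    have hpair := Option.some.inj hf'
    have hS' : (block a (l + 1)).take p = S' := congrArg Prod.fst hpair
    have hph' : 2 ^ (l + 1) % p = ph' := congrArg Prod.snd hpair
    subst hS' hph'
    have hSlen : ((block a (l + 1)).take p).length = p := by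
      rw [List.length_take]; omega
    refine ⟨by omega, ?_⟩
    intro t
    rw [show 2 ^ (l + 1 + 1) - 1 + t = N - 1 + (N + t) by omega, claimC (N + t), hSlen,
      getD_take d (Nat.mod_lt _ hp0), add_mod_mod, hN]
  · -- flag some : invariant says the pattern matches, flag persists
    obtain ⟨hq, hpat⟩ := hinv S ph hflag
    rw [← hN, ← hd] at hpat
    have hmatch : (List.range (2 ^ (l + 1))).map
        (fun j => a (idx s.k) (s.used (idx s.k) + 1 + j)) = patternBlock S d ph (2 ^ (l + 1)) := by
      rw [← hblock]
      apply List.ext_getElem?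
      intro n
      by_cases hn : n < N
      · rw [List.getElem?_eq_getElem (by omega),
          List.getElem?_eq_getElem
            (by simp only [patternBlock, List.length_map, List.length_range]; omega)]
        apply congrArg some
        rw [← List.getD_eq_getElem _ d, ← List.getD_eq_getElem _ d]
        simp only [patternBlock]
        rw [mapRange_getD _ _ _ _ (show n < 2 ^ (l + 1) by omega), ← hBout n hn]
        exact hpat n
      · rw [List.getElem?_eq_none (by omega),
          List.getElem?_eq_none
            (by simp only [patternBlock, List.length_map, List.length_range]; omega)]
    have hstep := step_flag_some hflag hmatch
    rw [← hrun] at hstep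
    refine ⟨?_, hstep.2⟩
    intro S' ph' hf'
    rw [hstep.1] at hf'
    have hpair := Option.some.inj hf'
    have hS' : S = S' := congrArg Prod.fst hpair
    have hph' : (ph + 2 ^ (l + 1)) % S.length = ph' := by
      have := congrArg Prod.snd hpair
      simpa [← hS'] using this
    subst hS'
    subst hph'
    refine ⟨hq, ?_⟩
    intro t
    rw [show 2 ^ (l + 1 + 1) - 1 + t = N - 1 + (N + t) by omega, hpat (N + t), add_mod_mod]
    congr 2
    omega

end Stmt10Aux
namespace Stmt10Aux
set_option linter.unusedSectionVars false
set_option maxHeartbeats 1000000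
variable {X : Type*} [DecidableEq X]

lemma k_const {a : ℕ → ℕ → X} {m r : ℕ} (hm : 1 ≤ m)
    (hper : ∀ n > r, output a (n + m) = output a n) :
    ∃ l₀, ∀ l, l₀ ≤ l → (run a l).k = (run a l₀).k := by
  set L₀ := r + 2 * m + 2 with hL₀
  have hpow : ∀ l, L₀ ≤ l → r + 2 * m + 2 ≤ 2 ^ (l + 1) := by
    intro l hl
    calc r + 2 * m + 2 = L₀ := rfl
    _ ≤ 2 ^ L₀ := Nat.le_of_lt (Nat.lt_two_pow_self (n := L₀))
    _ ≤ 2 ^ (l + 1) := Nat.pow_le_pow_right (by norm_num) (by omega)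
  by_cases hA : ∃ l₁, L₀ ≤ l₁ ∧ (run a l₁).flag = none
  · obtain ⟨l₁, hl₁, hfl⟩ := hA
    have hbase : Inv a l₁ := by
      intro S ph h; rw [hfl] at h; cases h
    have hind : ∀ n, Inv a (l₁ + n) ∧ (run a (l₁ + n)).k = (run a l₁).k := by
      intro n
      induction n with
      | zero => exact ⟨hbase, rfl⟩
      | succ n ih =>
        have h := inv_step hm hper (hpow (l₁ + n) (by omega)) ih.1
        exact ⟨h.1, h.2.trans ih.2⟩
    exact ⟨l₁, fun l hl => by
      have := (hind (l - l₁)).2; rwa [Nat.add_sub_cancel' hl] at this⟩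
  · push_neg at hA
    have hstep' : ∀ l, L₀ ≤ l → (run a (l + 1)).k = (run a l).k := by
      intro l hl
      rcases step_dichotomy a (run a l) (l + 1) with ⟨h1, h2⟩ | ⟨h1, h2⟩
      · exact absurd h1 (hA (l + 1) (by omega))
      · exact h2
    have hind : ∀ n, (run a (L₀ + n)).k = (run a L₀).k := by
      intro n
      induction n with
      | zero => rfl
      | succ n ih => rw [show L₀ + (n + 1) = (L₀ + n) + 1 from rfl, hstep' _ (by omega), ih]
    exact ⟨L₀, fun l hl => by
      have := hind (l - L₀); rwa [Nat.add_sub_cancel' hl] at this⟩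

lemma run_used_succ (a : ℕ → ℕ → X) (n : ℕ) :
    (run a (n + 1)).used = fun i' =>
      if i' = idx (run a n).k then (run a n).used (idx (run a n).k) + 2 ^ (n + 1)
      else (run a n).used i' :=
  step_fst_used a (run a n) (n + 1)

end Stmt10Aux

open Stmt10Aux

/-- If the output of the sequence interleaving algorithm is eventually
periodic, then from some block onward all blocks are drawn from a single input
sequence `i₀`, and consequently that input sequence is eventually periodic. -/
theorem stmt10 {X : Type*} [DecidableEq X] (a : ℕ → ℕ → X)
    (hout : EvPeriodic (output a)) :
    ∃ i₀, 1 ≤ i₀ ∧ (∃ L, ∀ l, L ≤ l → idx ((run a (l - 1)).k) = i₀) ∧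
      EvPeriodic (fun j => a i₀ j) := by
  obtain ⟨m, hm, r, hper⟩ := hout
  obtain ⟨l₀, hk⟩ := k_const hm hper
  set i₀ := idx ((run a l₀).k) with hi₀
  have hidx : ∀ l, l₀ ≤ l → idx ((run a l).k) = i₀ := fun l hl => by rw [hk l hl]
  refine ⟨i₀, by rw [hi₀]; unfold idx; omega, ⟨l₀ + 1, fun l hl => hidx (l - 1) (by omega)⟩, ?_⟩
  -- used bookkeeping
  set U := (run a l₀).used i₀ with hU
  set M := 2 ^ (l₀ + 1) with hM
  have hused : ∀ n, (run a (l₀ + n)).used i₀ = U + (2 ^ (l₀ + n + 1) - M) := by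
    intro n
    induction n with
    | zero => simp [hU, hM]
    | succ n ih =>
      have h := congrFun (run_used_succ a (l₀ + n)) i₀
      rw [hidx (l₀ + n) (by omega), if_pos rfl] at h
      rw [show l₀ + (n + 1) = (l₀ + n) + 1 from rfl, h, ih]
      have h1 : M ≤ 2 ^ (l₀ + n + 1) :=
        Nat.pow_le_pow_right (by norm_num) (by omega)
      have h2 : 2 ^ (l₀ + n + 1 + 1) = 2 * 2 ^ (l₀ + n + 1) := by rw [pow_succ]; ring
      omega
  -- the tail of the output is the tail of sequence i₀
  have key : ∀ j, 1 ≤ j → a i₀ (U + j) = output a (j + M - 2) := by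
    intro j hj
    set x := j + M - 1 with hx
    have hM1 : 1 ≤ M := Nat.one_le_two_pow
    have hMx : M ≤ x := by omega
    have hx1 : 1 ≤ x := by omega
    set l := Nat.log2 x with hl
    have hlog : 2 ^ l ≤ x ∧ x < 2 ^ (l + 1) := by
      rw [hl, Nat.log2_eq_log_two]
      exact ⟨Nat.pow_log_le_self 2 (by omega), Nat.lt_pow_succ_log_self (by norm_num) x⟩
    have hll : l₀ + 1 ≤ l := by
      by_contra hc
      push_neg at hc
      have : 2 ^ (l + 1) ≤ 2 ^ (l₀ + 1) := Nat.pow_le_pow_right (by norm_num) (by omega)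
      omega
    have hMl : M ≤ 2 ^ l := Nat.pow_le_pow_right (by norm_num) (by omega)
    set t := x - 2 ^ l with ht
    have htl : t < 2 ^ l := by
      have : 2 ^ (l + 1) = 2 * 2 ^ l := by rw [pow_succ]; ring
      omega
    have hu : (run a (l - 1)).used i₀ = U + (2 ^ l - M) := by
      have h := hused (l - 1 - l₀)
      rw [show l₀ + (l - 1 - l₀) = l - 1 by omega] at h
      rw [show l - 1 + 1 = l by omega] at h
      exact h
    have hout1 : output a (2 ^ l - 1 + t) = (block a l).getD t (a 1 1) := output_block a htl
    rw [block_eq, mapRange_getD _ _ _ _ htl, hidx (l - 1) (by omega), hu] at hout1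
    rw [show j + M - 2 = 2 ^ l - 1 + t by omega, hout1]
    congr 1
    omega
  refine ⟨m, hm, U + r + M, fun n hn => ?_⟩
  show a i₀ (n + m) = a i₀ n
  have hM1 : (1:ℕ) ≤ M := Nat.one_le_two_pow
  have e1 : n + m = U + (n - U + m) := by omega
  have e2 : n = U + (n - U) := by omega
  rw [e1, key _ (by omega)]
  conv_rhs => rw [e2, key _ (by omega)]
  rw [show n - U + m + M - 2 = (n - U + M - 2) + m by omega]
  exact hper _ (by omega)
end

section
/- Suppose the output sequence (b_n) of the sequence interleaving algorithm is not eventually periodic. Then the flag P is false at infinitely many stages, hence the index k is incremented infinitely often, and no input sequence (a_{i,j})_j is eventually periodic. -/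
section Aux
set_option linter.unusedSectionVars false
set_option linter.unusedVariables false
variable {X : Type*} [DecidableEq X]

lemma tri_succ (n : ℕ) : tri (n + 1) = tri n + n + 1 := by
  have h : (n + 1) * (n + 1 + 1) = n * (n + 1) + 2 * (n + 1) := by ring
  unfold tri; omega

lemma le_tri (n : ℕ) : n ≤ tri n := by
  induction n with
  | zero => simp [tri]
  | succ n ih => rw [tri_succ]; omega

lemma tri_mono {n m : ℕ} (h : n ≤ m) : tri n ≤ tri m := by
  induction m with
  | zero => simp [Nat.le_zero.mp h]
  | succ m ih =>
    rcases Nat.lt_or_ge n (m+1) with h' | h'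
    · have := ih (by omega); rw [tri_succ]; omega
    · have : n = m + 1 := by omega
      subst this; exact le_rfl

lemma idx_tri (n j : ℕ) (h : j ≤ n) : idx (tri n + j) = j + 1 := by
  have h2 : tri n * 2 = n * (n + 1) :=
    Nat.div_mul_cancel (even_iff_two_dvd.mp (Nat.even_mul_succ_self n))
  have hr : (2*n+1) * (2*n+1) = 2 * (n * (n+1)) + 2 * (n * (n+1)) + 1 := by ring
  have hr2 : (2*n+3) * (2*n+3) = 2 * (n * (n+1)) + 2 * (n * (n+1)) + 8 * n + 9 := by ring
  have hs1 : 2*n+1 ≤ Nat.sqrt (8 * (tri n + j) + 1) := Nat.le_sqrt.mpr (by omega)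
  have hs2 : Nat.sqrt (8 * (tri n + j) + 1) < 2*n+3 := Nat.sqrt_lt.mpr (by omega)
  unfold idx
  have he : (Nat.sqrt (8 * (tri n + j) + 1) - 1) / 2 = n := by omega
  rw [he]
  omega

lemma getD_map_range (f : ℕ → X) {n j : ℕ} (h : j < n) (d : X) :
    (((List.range n).map f).getD j d) = f j := by
  rw [List.getD_eq_getElem _ _ (by simpa using h)]
  simp

lemma window_cond_iff (f : ℕ → X) (N k : ℕ) (hk : k ≤ N) :
    ((List.range N).map f).drop k
      = ((List.range N).map f).take (((List.range N).map f).length - k)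
    ↔ ∀ j, j + k < N → f (k + j) = f j := by
  constructor
  · intro h j hj
    have hj1 : j < ((((List.range N).map f)).drop k).length := by simp; omega
    have e1 : ((((List.range N).map f)).drop k)[j]'hj1 = f (k + j) := by
      simp [List.getElem_drop]
    have e3 := List.getElem_of_eq h hj1
    have e2 : ((((List.range N).map f)).take (((List.range N).map f).length - k))[j]'(h ▸ hj1)
        = f j := by
      simp [List.getElem_take]
    rw [← e1, e3, e2]
  · intro h
    apply List.ext_getElem
    · simp only [List.length_drop, List.length_take, List.length_map, List.length_range]
      omega
    · intro n h1 h2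
      have h1' : n + k < N := by
        simp only [List.length_drop, List.length_map, List.length_range] at h1; omega
      simp only [List.getElem_drop, List.getElem_take, List.getElem_map, List.getElem_range]
      exact h n h1' 

lemma period_mod {g : ℕ → X} {m : ℕ} (hm : 0 < m) (h : ∀ t, g (t + m) = g t) (s : ℕ) :
    g s = g (s % m) := by
  conv_lhs => rw [← Nat.mod_add_div s m]
  generalize s / m = q
  induction q with
  | zero => simp
  | succ q ih => rw [Nat.mul_succ, ← Nat.add_assoc, h, ih]

lemma period_extend {g : ℕ → X} {m p N : ℕ} (hp : 0 < p) (hpm : p ≤ m) (hN : m + m ≤ N)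
    (hm : ∀ t, g (t + m) = g t) (hw : ∀ j, j + p < N → g (j + p) = g j) :
    ∀ t, g (t + p) = g t := by
  have hm0 : 0 < m := lt_of_lt_of_le hp hpm
  intro t
  have e : (t % m + p) % m = (t + p) % m := by
    conv_rhs => rw [Nat.add_mod]
    conv_lhs => rw [Nat.add_mod]
    simp [Nat.mod_mod_of_dvd]
  calc g (t + p) = g ((t + p) % m) := period_mod hm0 hm _
    _ = g ((t % m + p) % m) := by rw [e]
    _ = g (t % m + p) := (period_mod hm0 hm _).symm
    _ = g (t % m) := hw _ (by have := Nat.mod_lt t hm0; omega)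
    _ = g t := (period_mod hm0 hm t).symm

lemma listPeriod?_some {L : List X} {p : ℕ} (h : listPeriod? L = some p) :
    0 < p ∧ p < L.length ∧ L.drop p = L.take (L.length - p) := by
  have h1 := List.find?_some h
  have h2 := List.mem_of_find?_eq_some h
  simp only [Bool.and_eq_true, decide_eq_true_eq, beq_iff_eq] at h1
  exact ⟨h1.1, by simpa using h2, h1.2⟩

lemma listPeriod?_min {L : List X} {p : ℕ} (h : listPeriod? L = some p) {m : ℕ} (hm : 0 < m)
    (hmlen : m < L.length) (hcond : L.drop m = L.take (L.length - m)) : p ≤ m := by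
  unfold listPeriod? at h
  rw [List.find?_eq_some_iff_getElem] at h
  obtain ⟨hp, i, hi, hval, hmin⟩ := h
  have hip : i = p := by rw [List.getElem_range] at hval; exact hval
  by_contra hlt
  have hmi : m < i := by omega
  have := hmin m hmi
  rw [List.getElem_range] at this
  simp [hm, hcond] at this

lemma listPeriod?_isSome {L : List X} {m : ℕ} (hm : 0 < m) (hmlen : m < L.length)
    (hcond : L.drop m = L.take (L.length - m)) : ∃ p, listPeriod? L = some p := by
  rw [← Option.isSome_iff_exists]
  unfold listPeriod?
  rw [List.find?_isSome]
  exact ⟨m, by simpa using hmlen, by simp [hm, hcond]⟩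

end Aux
section StepLemmas
set_option linter.unusedSectionVars false
variable {X : Type*} [DecidableEq X] (a : ℕ → ℕ → X)

lemma step_used (s : IState X) (l : ℕ) :
    (step a s l).1.used
      = fun i' => if i' = idx s.k then s.used (idx s.k) + 2 ^ l else s.used i' := by
  unfold step
  dsimp only
  split
  · split <;> rfl
  · split <;> rfl

lemma step_cases (s : IState X) (l : ℕ) :
    ((step a s l).1.flag = none ∧ (step a s l).1.k = s.k + 1) ∨
    ((step a s l).1.k = s.k ∧ (step a s l).1.flag ≠ none) := by
  unfold step
  dsimp only
  split
  · split
    · right; simp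
    · left; simp
  · split
    · right; simp
    · left; simp

lemma run_succ (l : ℕ) : run a (l + 1) = (step a (run a l) (l + 1)).1 := rfl

lemma run_k_mono : Monotone fun l => (run a l).k := by
  apply monotone_nat_of_le_succ
  intro l
  rcases step_cases a (run a l) (l+1) with ⟨_, h⟩ | ⟨h, _⟩ <;>
    rw [run_succ] <;> omega

lemma run_k_le (l : ℕ) : (run a l).k ≤ l + 1 := by
  induction l with
  | zero => exact le_rfl
  | succ l ih =>
    rcases step_cases a (run a l) (l+1) with ⟨_, h⟩ | ⟨h, _⟩ <;>
      rw [run_succ] <;> omega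

lemma run_k_succ_le (l : ℕ) : (run a (l+1)).k ≤ (run a l).k + 1 := by
  rcases step_cases a (run a l) (l+1) with ⟨_, h⟩ | ⟨h, _⟩ <;> rw [run_succ] <;> omega

lemma flag_none_k {l : ℕ} (h : (run a (l+1)).flag = none) :
    (run a (l+1)).k = (run a l).k + 1 := by
  rcases step_cases a (run a l) (l+1) with ⟨_, h'⟩ | ⟨h', hne⟩
  · rw [run_succ]; exact h'
  · exact absurd h (by rw [run_succ]; exact hne)

lemma run_used_mono (i : ℕ) : Monotone fun l => (run a l).used i := by
  apply monotone_nat_of_le_succ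
  intro l
  rw [run_succ, step_used]
  dsimp only
  split
  · rename_i h; rw [h]; exact Nat.le_add_right _ _
  · exact le_rfl

lemma step_flag_some (s : IState X) (l : ℕ) (S : List X) (ph : ℕ)
    (hf : s.flag = some (S, ph)) (hn : (step a s l).1.flag ≠ none) :
    (step a s l).2 = patternBlock S (a 1 1) ph (2 ^ l) ∧
    (step a s l).1.flag = some (S, (ph + 2 ^ l) % S.length) ∧ (step a s l).1.k = s.k := by
  unfold step at hn ⊢
  rw [hf] at hn ⊢
  dsimp only at hn ⊢
  split_ifs at hn ⊢ with h
  · exact ⟨h, rfl, rfl⟩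
  · exact absurd rfl hn

lemma step_flag_none_branch (s : IState X) (l : ℕ) (hf : s.flag = none) {p : ℕ}
    (hlp : listPeriod? ((List.range (2 ^ l)).map fun j => a (idx s.k) (s.used (idx s.k) + 1 + j))
      = some p) :
    (step a s l).1.flag
      = some (((List.range (2 ^ l)).map fun j => a (idx s.k) (s.used (idx s.k) + 1 + j)).take p,
          2 ^ l % p) ∧
    (step a s l).1.k = s.k := by
  unfold step
  rw [hf]
  dsimp only
  rw [hlp]
  exact ⟨rfl, rfl⟩

lemma run_flag_length : ∀ l {S : List X} {ph : ℕ},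
    (run a l).flag = some (S, ph) → 0 < S.length := by
  intro l
  induction l with
  | zero => intro S ph h; simp [run] at h
  | succ l ih =>
    intro S ph h
    rw [run_succ] at h
    rcases hf : (run a l).flag with _ | ⟨S', ph'⟩
    · unfold step at h
      rw [hf] at h
      dsimp only at h
      rcases hlp : listPeriod?
          ((List.range (2 ^ (l+1))).map fun j =>
            a (idx (run a l).k) ((run a l).used (idx (run a l).k) + 1 + j)) with _ | p
      · rw [hlp] at h; simp at h
      · rw [hlp] at h
        simp only [Option.some.injEq, Prod.mk.injEq] at h
        obtain ⟨hS, _⟩ := h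
        obtain ⟨hp0, hplen, _⟩ := listPeriod?_some hlp
        rw [← hS]
        simp only [List.length_take, List.length_map, List.length_range]
        exact lt_min hp0 (Nat.two_pow_pos _)
    · unfold step at h
      rw [hf] at h
      dsimp only at h
      split_ifs at h with hc
      simp only [Option.some.injEq, Prod.mk.injEq] at h
      rw [← h.1]
      exact ih hf

end StepLemmas
section Part1
set_option linter.unusedSectionVars false
variable {X : Type*} [DecidableEq X] (a : ℕ → ℕ → X)

lemma output_evperiodic (L : ℕ) (hL : ∀ l, L ≤ l → (run a l).flag ≠ none) :
    EvPeriodic (output a) := by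
  obtain ⟨⟨S, ph0⟩, hf0⟩ : ∃ x, (run a L).flag = some x :=
    Option.ne_none_iff_exists'.mp (hL L le_rfl)
  have hp : 0 < S.length := run_flag_length a L hf0
  set p := S.length with hp_def
  have claim : ∀ d, ∃ ph, (run a (L + d)).flag = some (S, ph) ∧
      (ph + 2 ^ (L + 1)) % p = (ph0 + 2 ^ (L + d + 1)) % p := by
    intro d
    induction d with
    | zero => exact ⟨ph0, hf0, rfl⟩
    | succ d ih =>
      obtain ⟨ph, hf, hmod⟩ := ih
      have hn : (run a (L + d + 1)).flag ≠ none := hL _ (by omega)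
      rw [run_succ] at hn
      have hs := step_flag_some a (run a (L + d)) (L + d + 1) S ph hf hn
      refine ⟨(ph + 2 ^ (L + d + 1)) % p, ?_, ?_⟩
      · show (run a ((L + d) + 1)).flag = _
        rw [run_succ]; exact hs.2.1
      · have h3 : 2 ^ (L + d + 1 + 1) = 2 ^ (L + d + 1) + 2 ^ (L + d + 1) := by
          rw [pow_succ]; ring
        show _ = (ph0 + 2 ^ (L + d + 1 + 1)) % p
        calc ((ph + 2 ^ (L + d + 1)) % p + 2 ^ (L + 1)) % p
            = (ph + 2 ^ (L + d + 1) + 2 ^ (L + 1)) % p := Nat.mod_add_mod _ _ _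
          _ = (ph + 2 ^ (L + 1) + 2 ^ (L + d + 1)) % p := by congr 1; omega
          _ = ((ph + 2 ^ (L + 1)) % p + 2 ^ (L + d + 1)) % p := (Nat.mod_add_mod _ _ _).symm
          _ = ((ph0 + 2 ^ (L + d + 1)) % p + 2 ^ (L + d + 1)) % p := by rw [hmod]
          _ = (ph0 + 2 ^ (L + d + 1) + 2 ^ (L + d + 1)) % p := Nat.mod_add_mod _ _ _
          _ = (ph0 + 2 ^ (L + d + 1 + 1)) % p := by congr 1; omega
  set d0 := a 1 1 with hd0
  set C := ph0 + 1 + (p * 2 ^ (L + 1) - 2 ^ (L + 1)) with hC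
  have master : ∀ n, 2 ^ (L + 1) ≤ n + 1 → output a n = S.getD ((C + n) % p) d0 := by
    intro n hn
    have hn0 : n + 1 ≠ 0 := by omega
    set l := Nat.log2 (n + 1) with hl
    have h2l : 2 ^ l ≤ n + 1 := Nat.log2_self_le hn0
    have hlt : n + 1 < 2 ^ (l + 1) := Nat.lt_log2_self
    have hLl : L + 1 ≤ l := (Nat.le_log2 hn0).mpr hn
    obtain ⟨ph, hf, hmod⟩ := claim (l - 1 - L)
    have hl1 : L + (l - 1 - L) = l - 1 := by omega
    have hl2 : l - 1 + 1 = l := by omega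
    rw [hl1] at hf hmod
    rw [hl2] at hmod
    have hrun : run a l = (step a (run a (l - 1)) l).1 := by
      conv_lhs => rw [show l = (l - 1) + 1 by omega]
      rw [run_succ, hl2]
    have hn2 : (step a (run a (l - 1)) l).1.flag ≠ none := by
      rw [← hrun]; exact hL l (by omega)
    have hs := step_flag_some a (run a (l - 1)) l S ph hf hn2
    have hblock : block a l = patternBlock S d0 ph (2 ^ l) := hs.1
    have hpow : 2 ^ l + 2 ^ l = 2 ^ (l + 1) := by rw [pow_succ]; ring
    have hout : output a n = S.getD ((ph + (n + 1 - 2 ^ l)) % p) d0 := by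
      unfold output
      rw [← hl, hblock]
      unfold patternBlock
      rw [getD_map_range (h := by omega)]
    rw [hout]
    congr 1
    have h1p : 2 ^ (L + 1) ≤ p * 2 ^ (L + 1) := Nat.le_mul_of_pos_left _ hp
    have key : (ph + (n + 1 - 2 ^ l) + (2 ^ (L + 1) + 2 ^ l)) % p
        = (C + n + (2 ^ (L + 1) + 2 ^ l)) % p := by
      calc (ph + (n + 1 - 2 ^ l) + (2 ^ (L + 1) + 2 ^ l)) % p
          = (ph + 2 ^ (L + 1) + (n + 1)) % p := by congr 1; omega
        _ = ((ph + 2 ^ (L + 1)) % p + (n + 1)) % p := (Nat.mod_add_mod _ _ _).symm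
        _ = ((ph0 + 2 ^ l) % p + (n + 1)) % p := by rw [hmod]
        _ = (ph0 + 2 ^ l + (n + 1)) % p := Nat.mod_add_mod _ _ _
        _ = (ph0 + 2 ^ l + (n + 1) + p * 2 ^ (L + 1)) % p :=
            (Nat.add_mul_mod_self_left _ _ _).symm
        _ = (C + n + (2 ^ (L + 1) + 2 ^ l)) % p := by congr 1; omega
    exact Nat.ModEq.add_right_cancel' _ key
  refine ⟨p, hp, 2 ^ (L + 1), fun n hn => ?_⟩
  rw [master n (by omega), master (n + p) (by omega)]
  congr 1
  rw [show C + (n + p) = (C + n) + p by omega, Nat.add_mod_right]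

end Part1
section Part3
set_option linter.unusedSectionVars false
variable {X : Type*} [DecidableEq X] (a : ℕ → ℕ → X)

lemma inv_step (i K : ℕ) (hiK : idx K = i) (t : ℕ) (S : List X) (ph : ℕ)
    (hf : (run a t).flag = some (S, ph)) (hk : (run a t).k = K)
    (hH : ∀ j, a i ((run a t).used i + 1 + j) = S.getD ((ph + j) % S.length) (a 1 1)) :
    (run a (t + 1)).flag = some (S, (ph + 2 ^ (t + 1)) % S.length) ∧
    (run a (t + 1)).k = K ∧
    ∀ j, a i ((run a (t + 1)).used i + 1 + j) =
      S.getD (((ph + 2 ^ (t + 1)) % S.length + j) % S.length) (a 1 1) := by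
  have hidx : idx (run a t).k = i := by rw [hk, hiK]
  have hB : ((List.range (2 ^ (t + 1))).map fun j =>
        a (idx (run a t).k) ((run a t).used (idx (run a t).k) + 1 + j))
      = patternBlock S (a 1 1) ph (2 ^ (t + 1)) := by
    unfold patternBlock
    rw [hidx]
    exact List.map_congr_left fun j _ => hH j
  have hn : (step a (run a t) (t + 1)).1.flag ≠ none := by
    unfold step
    rw [hf]
    dsimp only
    rw [if_pos hB]
    simp
  have hs := step_flag_some a (run a t) (t + 1) S ph hf hn
  have hused : (run a (t + 1)).used i = (run a t).used i + 2 ^ (t + 1) := by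
    rw [run_succ, step_used]
    dsimp only
    rw [if_pos hidx.symm, hidx]
  refine ⟨by rw [run_succ]; exact hs.2.1, by rw [run_succ, hs.2.2]; exact hk, ?_⟩
  intro j
  rw [hused]
  have h1 := hH (2 ^ (t + 1) + j)
  rw [show (run a t).used i + 1 + (2 ^ (t + 1) + j)
      = (run a t).used i + 2 ^ (t + 1) + 1 + j by omega] at h1
  rw [h1]
  congr 1
  rw [Nat.mod_add_mod, Nat.add_assoc]

lemma inv_forever (i K : ℕ) (hiK : idx K = i) (t : ℕ) (S : List X) (ph : ℕ)
    (hf : (run a t).flag = some (S, ph)) (hk : (run a t).k = K)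
    (hH : ∀ j, a i ((run a t).used i + 1 + j) = S.getD ((ph + j) % S.length) (a 1 1)) :
    ∀ d, (run a (t + d)).flag ≠ none := by
  have main : ∀ d, ∃ ph', (run a (t + d)).flag = some (S, ph') ∧ (run a (t + d)).k = K ∧
      ∀ j, a i ((run a (t + d)).used i + 1 + j) = S.getD ((ph' + j) % S.length) (a 1 1) := by
    intro d
    induction d with
    | zero => exact ⟨ph, hf, hk, hH⟩
    | succ d ih =>
      obtain ⟨ph', hf', hk', hH'⟩ := ih
      obtain ⟨h1, h2, h3⟩ := inv_step a i K hiK (t + d) S ph' hf' hk' hH'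
      exact ⟨(ph' + 2 ^ (t + d + 1)) % S.length, h1, h2, h3⟩
  intro d
  obtain ⟨ph', hf', _, _⟩ := main d
  rw [hf']
  simp

end Part3
section Wrap
variable {X : Type*} [DecidableEq X]

lemma run_k_le_run (a : ℕ → ℕ → X) {l l' : ℕ} (h : l ≤ l') :
    (run a l).k ≤ (run a l').k := run_k_mono a h

lemma run_used_le_run (a : ℕ → ℕ → X) (i : ℕ) {l l' : ℕ} (h : l ≤ l') :
    (run a l).used i ≤ (run a l').used i := run_used_mono a i h

end Wrap

/-- If the output of the sequence interleaving algorithm is not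
eventually periodic, then the flag `P` is false at infinitely many stages, hence the
index `k` is incremented infinitely often (so it tends to infinity), and no input
sequence is eventually periodic. -/
theorem stmt11 {X : Type*} [DecidableEq X] (a : ℕ → ℕ → X)
    (hout : ¬EvPeriodic (output a)) :
    (∀ L, ∃ l, L ≤ l ∧ (run a l).flag = none) ∧
    (∀ K, ∃ l, K ≤ (run a l).k) ∧
    ∀ i, 1 ≤ i → ¬EvPeriodic (fun j => a i j) := by
  have h1 : ∀ L, ∃ l, L ≤ l ∧ (run a l).flag = none := by
    intro L
    by_contra h
    push_neg at h
    exact hout (output_evperiodic a L fun l hl => h l hl)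
  have h2 : ∀ K, ∃ l, K ≤ (run a l).k := by
    intro K
    induction K with
    | zero => exact ⟨0, Nat.zero_le _⟩
    | succ K ih =>
      obtain ⟨l, hl⟩ := ih
      obtain ⟨l', hll', hfl'⟩ := h1 (l + 1)
      have hl'1 : l' = (l' - 1) + 1 := by omega
      have hfl'' : (run a ((l' - 1) + 1)).flag = none := by rw [← hl'1]; exact hfl'
      have hk' := flag_none_k a hfl''
      have hmono : (run a l).k ≤ (run a (l' - 1)).k := run_k_le_run a (by omega)
      have heq : (run a l').k = (run a ((l' - 1) + 1)).k := by rw [← hl'1]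
      exact ⟨l', by omega⟩
  have hattain : ∀ K, 1 ≤ K → ∃ l, (run a l).k = K ∧ (run a l).flag = none := by
    intro K hK
    have hex : ∃ l, K ≤ (run a l).k := h2 K
    have hspec := Nat.find_spec hex
    cases hl0 : Nat.find hex with
    | zero =>
      rw [hl0] at hspec
      have h0 : (run a 0).k = 1 := rfl
      exact ⟨0, by omega, rfl⟩
    | succ l'' =>
      have hmin := Nat.find_min hex (m := l'') (by omega)
      rw [hl0] at hspec
      push_neg at hmin
      have hb := run_k_succ_le a l''
      have hkeq : (run a (l'' + 1)).k = K := by omega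
      refine ⟨l'' + 1, hkeq, ?_⟩
      rcases step_cases a (run a l'') (l'' + 1) with ⟨hn, _⟩ | ⟨hsame, _⟩
      · rw [run_succ]; exact hn
      · exfalso; rw [← run_succ] at hsame; omega
  refine ⟨h1, h2, ?_⟩
  intro i hi hev
  obtain ⟨m, hm, r, hper⟩ := hev
  have hper' : ∀ n, n > r → a i (n + m) = a i n := fun n hn => hper n hn
  -- first visit to sequence i, to make `used i` large
  have hmax1a := le_max_left (i - 1) r
  have hmax1b := le_max_right (i - 1) r
  set n1 := max (i - 1) r + 1 with hn1
  set K1 := tri n1 + (i - 1) with hK1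
  have htri1 : n1 ≤ tri n1 := le_tri n1
  have hidx1 : idx K1 = i := by rw [hK1, idx_tri n1 (i - 1) (by omega)]; omega
  obtain ⟨l1, hk1, hfl1⟩ := hattain K1 (by omega)
  have hl1K : K1 ≤ l1 + 1 := by have := run_k_le a l1; omega
  have h2pow1 : l1 + 2 ≤ 2 ^ (l1 + 1) := by have := Nat.lt_two_pow_self (n := l1 + 1); omega
  have hidxk1 : idx (run a l1).k = i := by rw [hk1, hidx1]
  have hu1 : r + 1 ≤ (run a (l1 + 1)).used i := by
    rw [run_succ, step_used]
    simp only [hidxk1, if_pos rfl, if_true, eq_self_iff_true]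
    omega
  -- second visit, far out
  have hmax2a := le_max_left (n1 + 1) (m + 1)
  have hmax2b := le_max_right (n1 + 1) (m + 1)
  set n2 := max (n1 + 1) (m + 1) with hn2
  set K2 := tri n2 + (i - 1) with hK2
  have htri2 : n2 ≤ tri n2 := le_tri n2
  have htri12 : tri (n1 + 1) ≤ tri n2 := tri_mono (by omega)
  have htri13 : tri (n1 + 1) = tri n1 + n1 + 1 := tri_succ n1
  have hidx2 : idx K2 = i := by rw [hK2, idx_tri n2 (i - 1) (by omega)]; omega
  have hK12 : K1 < K2 := by omega
  obtain ⟨l2, hk2, hfl2⟩ := hattain K2 (by omega)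
  have hl12 : l1 + 1 ≤ l2 := by
    by_contra hc
    have : (run a l2).k ≤ (run a l1).k := run_k_le_run a (by omega)
    omega
  have hu2 : r + 1 ≤ (run a l2).used i := le_trans hu1 (run_used_le_run a i hl12)
  have hl2K : K2 ≤ l2 + 1 := by have := run_k_le a l2; omega
  have h2m : m + m < 2 ^ (l2 + 1) := by
    have ha' : 2 ^ (m + 1) ≤ 2 ^ (l2 + 1) := Nat.pow_le_pow_right (by norm_num) (by omega)
    have hb' : m < 2 ^ m := Nat.lt_two_pow_self (n := m)
    have hc' : 2 ^ (m + 1) = 2 ^ m + 2 ^ m := by rw [pow_succ]; ring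
    omega
  have hidxk : idx (run a l2).k = i := by rw [hk2, hidx2]
  set g : ℕ → X := fun t => a i ((run a l2).used i + 1 + t) with hg
  have hgm : ∀ t, g (t + m) = g t := by
    intro t
    rw [hg]
    dsimp only
    rw [show (run a l2).used i + 1 + (t + m) = ((run a l2).used i + 1 + t) + m by omega]
    exact hper' _ (by omega)
  have hBlen : ((List.range (2 ^ (l2 + 1))).map g).length = 2 ^ (l2 + 1) := by simp
  have hwm : ((List.range (2 ^ (l2 + 1))).map g).drop m
      = ((List.range (2 ^ (l2 + 1))).map g).take
          (((List.range (2 ^ (l2 + 1))).map g).length - m) := by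
    rw [window_cond_iff g (2 ^ (l2 + 1)) m (by omega)]
    intro j hj
    rw [Nat.add_comm m j]
    exact hgm j
  obtain ⟨p, hlp⟩ := listPeriod?_isSome hm (by rw [hBlen]; omega) hwm
  obtain ⟨hp0, hplen, hpcond⟩ := listPeriod?_some hlp
  have hpm : p ≤ m := listPeriod?_min hlp hm (by rw [hBlen]; omega) hwm
  have hwp : ∀ j, j + p < 2 ^ (l2 + 1) → g (j + p) = g j := by
    intro j hj
    have := (window_cond_iff g (2 ^ (l2 + 1)) p (by omega)).mp hpcond j hj
    rw [Nat.add_comm p j] at this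
    exact this
  have hgp : ∀ t, g (t + p) = g t := period_extend hp0 hpm (by omega) hgm hwp
  have hlp' : listPeriod? ((List.range (2 ^ (l2 + 1))).map fun j =>
      a (idx (run a l2).k) ((run a l2).used (idx (run a l2).k) + 1 + j)) = some p := by
    simp only [hidxk]
    exact hlp
  have hstep := step_flag_none_branch a (run a l2) (l2 + 1) hfl2 hlp'
  set S := ((List.range (2 ^ (l2 + 1))).map fun j =>
      a (idx (run a l2).k) ((run a l2).used (idx (run a l2).k) + 1 + j)).take p with hSdef
  have hSeq : S = ((List.range (2 ^ (l2 + 1))).map g).take p := by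
    rw [hSdef]
    simp only [hidxk]
    rfl
  have hSlen : S.length = p := by
    rw [hSeq, List.length_take, List.length_map, List.length_range]
    exact min_eq_left (by omega)
  have hfl' : (run a (l2 + 1)).flag = some (S, 2 ^ (l2 + 1) % p) := by
    rw [run_succ, hstep.1]
  have hk' : (run a (l2 + 1)).k = K2 := by rw [run_succ, hstep.2]; exact hk2
  have hused' : (run a (l2 + 1)).used i = (run a l2).used i + 2 ^ (l2 + 1) := by
    rw [run_succ, step_used]
    simp only [hidxk, if_pos rfl, if_true, eq_self_iff_true]
  have hgetS : ∀ q, q < p → S.getD q (a 1 1) = g q := by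
    intro q hq
    have hq' : q < S.length := by rw [hSlen]; exact hq
    rw [List.getD_eq_getElem _ _ hq', List.getElem_of_eq hSeq hq']
    simp [List.getElem_take]
  have hH : ∀ j, a i ((run a (l2 + 1)).used i + 1 + j)
      = S.getD ((2 ^ (l2 + 1) % p + j) % S.length) (a 1 1) := by
    intro j
    rw [hused', hSlen]
    have e1 : a i ((run a l2).used i + 2 ^ (l2 + 1) + 1 + j) = g (2 ^ (l2 + 1) + j) := by
      rw [hg]
      dsimp only
      congr 1
      omega
    rw [e1, period_mod hp0 hgp (2 ^ (l2 + 1) + j), Nat.mod_add_mod,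
      hgetS _ (Nat.mod_lt _ hp0)]
  have hforever := inv_forever a i K2 hidx2 (l2 + 1) S (2 ^ (l2 + 1) % p) hfl' hk' hH
  obtain ⟨l', hl', hflnone⟩ := h1 (l2 + 2)
  have hcontra := hforever (l' - (l2 + 1))
  rw [show l2 + 1 + (l' - (l2 + 1)) = l' by omega] at hcontra
  exact hcontra hflnone
end
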